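/- Let d ≥ 1, let N ≥ 1 and 1 ≤ A ≤ N be real numbers, and let Q := (−A/2,A/2)^d ⊂ ℝ^d. Then for all ξ ∈ 2Ne₁ + 2Q and all η ∈ Ne₁ + Q, the wave phase φ⁽²⁾(ξ,η) := |ξ| − |η|² + |η−ξ|² satisfies |φ⁽²⁾(ξ,η)| ≤ 9 d N A. -/

import Mathlib

/-!
Expanding the square gives `‖ξ‖ - ‖η‖² + ‖η - ξ‖² = ‖ξ‖ + ⟪ξ - 2η, ξ⟫`. On the given boxes
`ξ - 2η` is of size `O(√d A)` (the large parts `2N e₁` cancel) while `‖ξ‖ ≤ 2N + √d A`, so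
Cauchy–Schwarz bounds the phase by `(2N + √d A)(1 + 2√d A) ≤ 9 d N A`.
-/

open RealInnerProductSpace

theorem EuclideanSpace.norm_le_sqrt_card_mul {ι : Type*} [Fintype ι] {x : EuclideanSpace ℝ ι}
    {c : ℝ} (hc : 0 ≤ c) (hx : ∀ i, |x i| ≤ c) : ‖x‖ ≤ √(Fintype.card ι) * c := by
  have hsum : ∑ i, ‖x i‖ ^ 2 ≤ ∑ _i : ι, c ^ 2 :=
    Finset.sum_le_sum fun i _ ↦ pow_le_pow_left₀ (norm_nonneg _) (hx i) 2
  calc ‖x‖ = √(∑ i, ‖x i‖ ^ 2) := EuclideanSpace.norm_eq x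
    _ ≤ √(Fintype.card ι * c ^ 2) := by
      gcongr
      simpa only [Finset.sum_const, Finset.card_univ, nsmul_eq_mul] using hsum
    _ = √(Fintype.card ι) * c := by rw [Real.sqrt_mul (Nat.cast_nonneg _), Real.sqrt_sq hc]

section WavePhase

variable {E : Type*} [NormedAddCommGroup E] [InnerProductSpace ℝ E]

theorem norm_sub_norm_sq_add_norm_sub_sq_eq (ξ η : E) :
    ‖ξ‖ - ‖η‖ ^ 2 + ‖η - ξ‖ ^ 2 = ‖ξ‖ + ⟪ξ - (2 : ℝ) • η, ξ⟫ := by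
  rw [norm_sub_sq_real, inner_sub_left, inner_smul_left, real_inner_self_eq_norm_sq,
    real_inner_comm]
  simp only [conj_trivial]
  ring

theorem abs_norm_sub_norm_sq_add_norm_sub_sq_le (ξ η : E) :
    |‖ξ‖ - ‖η‖ ^ 2 + ‖η - ξ‖ ^ 2| ≤ ‖ξ‖ * (1 + ‖ξ - (2 : ℝ) • η‖) := by
  rw [norm_sub_norm_sq_add_norm_sub_sq_eq]
  calc |‖ξ‖ + ⟪ξ - (2 : ℝ) • η, ξ⟫| ≤ ‖ξ‖ + ‖ξ - (2 : ℝ) • η‖ * ‖ξ‖ := by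
        grw [abs_add_le, abs_norm, abs_real_inner_le_norm]
    _ = ‖ξ‖ * (1 + ‖ξ - (2 : ℝ) • η‖) := by ring

theorem abs_norm_sub_norm_sq_add_norm_sub_sq_le_of_near {c ξ η : E} {r : ℝ}
    (hξ : ‖ξ - (2 : ℝ) • c‖ ≤ r) (hη : ‖η - c‖ ≤ r / 2) :
    |‖ξ‖ - ‖η‖ ^ 2 + ‖η - ξ‖ ^ 2| ≤ (2 * ‖c‖ + r) * (1 + 2 * r) := by
  have hξ_norm : ‖ξ‖ ≤ 2 * ‖c‖ + r := by
    calc ‖ξ‖ = ‖(2 : ℝ) • c + (ξ - (2 : ℝ) • c)‖ := by rw [add_sub_cancel]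
      _ ≤ 2 * ‖c‖ + r := by grw [norm_add_le, norm_smul, Real.norm_two, hξ]
  have hdiff : ‖ξ - (2 : ℝ) • η‖ ≤ 2 * r := by
    calc ‖ξ - (2 : ℝ) • η‖ = ‖(ξ - (2 : ℝ) • c) - (2 : ℝ) • (η - c)‖ := by congr 1; module
      _ ≤ 2 * r := by grw [norm_sub_le, norm_smul, Real.norm_two, hξ, hη]; linarith
  grw [abs_norm_sub_norm_sq_add_norm_sub_sq_le, hξ_norm, hdiff]
  · exact (norm_nonneg ξ).trans hξ_norm

end WavePhase

theorem two_add_mul_one_add_two_mul_le {s N A : ℝ} (hs : 1 ≤ s) (hA : 1 ≤ A) (hAN : A ≤ N) :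
    (2 * N + s * A) * (1 + 2 * (s * A)) ≤ 9 * s ^ 2 * N * A := by
  have hsA : s ≤ s * A := le_mul_of_one_le_right (by linarith) hA
  have hs2 : s ≤ s ^ 2 := by nlinarith
  have hN : 0 ≤ N := by linarith
  nlinarith [mul_le_mul_of_nonneg_left hAN (by positivity : 0 ≤ s ^ 2 * A),
    mul_le_mul_of_nonneg_right hs2 (by positivity : 0 ≤ N * A),
    mul_le_mul_of_nonneg_right (mul_le_mul hs2 hA zero_le_one (by positivity)) hN,
    mul_le_mul_of_nonneg_right hs2 (mul_nonneg hN (by linarith : (0 : ℝ) ≤ A - 1))]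

theorem statement_12 (d : ℕ) (hd : 0 < d) (N A : ℝ) (hN : 1 ≤ N) (hA : 1 ≤ A)
    (hAN : A ≤ N) (ξ η : EuclideanSpace ℝ (Fin d))
    (hξ : ∀ i, |(ξ - (2 * N) • EuclideanSpace.single (⟨0, hd⟩ : Fin d) (1 : ℝ)) i| < A)
    (hη : ∀ i, |(η - N • EuclideanSpace.single (⟨0, hd⟩ : Fin d) (1 : ℝ)) i| < A / 2) :
    |‖ξ‖ - ‖η‖ ^ 2 + ‖η - ξ‖ ^ 2| ≤ 9 * d * N * A := by
  set c := N • EuclideanSpace.single (⟨0, hd⟩ : Fin d) (1 : ℝ)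
  have hc : ‖c‖ = N := by simp [c, norm_smul, abs_of_pos (by linarith : 0 < N)]
  have hξ' : ‖ξ - (2 : ℝ) • c‖ ≤ √d * A := by
    rw [smul_smul]
    simpa using EuclideanSpace.norm_le_sqrt_card_mul (by linarith) fun i ↦ (hξ i).le
  have hη' : ‖η - c‖ ≤ √d * A / 2 := by
    simpa [mul_div_assoc] using EuclideanSpace.norm_le_sqrt_card_mul (by linarith) fun i ↦ (hη i).le
  have hs : 1 ≤ √(d : ℝ) := Real.one_le_sqrt.mpr (by exact_mod_cast hd)
  calc |‖ξ‖ - ‖η‖ ^ 2 + ‖η - ξ‖ ^ 2| ≤ (2 * ‖c‖ + √d * A) * (1 + 2 * (√d * A)) :=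
        abs_norm_sub_norm_sq_add_norm_sub_sq_le_of_near hξ' hη'
    _ ≤ 9 * √d ^ 2 * N * A := by rw [hc]; exact two_add_mul_one_add_two_mul_le hs hA hAN
    _ = 9 * d * N * A := by rw [Real.sq_sqrt (Nat.cast_nonneg d)]
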